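/- arXiv:2509.10994 — 3 statements merged into one kernel-verified Lean document; each statement's English description precedes it below -/
import Mathlib

section
/- Let A₁, A₂ be Hermitian d×d complex matrices with A₁ ≤ βI and A₂ ≥ αI in the Loewner order for scalars α, β > 0, and suppose A₂ − A₁ ≤ −cI for some c ≥ 0. Then A₂A₁⁻¹(A₂ − A₁) ≤ −c(α/β)²·I in the Loewner order. -/
open Matrix
open scoped ComplexOrder

section Aux
variable {d : ℕ}

lemma psd_smul {A : Matrix (Fin d) (Fin d) ℂ} (hA : A.PosSemidef) {r : ℝ} (hr : 0 ≤ r) :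
    ((r : ℂ) • A).PosSemidef := by
  refine Matrix.PosSemidef.of_dotProduct_mulVec_nonneg ?_ (fun x => ?_)
  · have : star (r : ℂ) = (r : ℂ) := by simp
    rw [Matrix.IsHermitian, conjTranspose_smul, hA.1, this]
  · rw [smul_mulVec, dotProduct_smul, smul_eq_mul]
    exact mul_nonneg (Complex.zero_le_real.2 hr) (hA.dotProduct_mulVec_nonneg x)

lemma pd_smul_one {r : ℝ} (hr : 0 < r) :
    ((r : ℂ) • (1 : Matrix (Fin d) (Fin d) ℂ)).PosDef := by
  refine Matrix.PosDef.of_dotProduct_mulVec_pos (psd_smul Matrix.PosSemidef.one hr.le).1 (fun x hx => ?_)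
  rw [smul_mulVec, one_mulVec, dotProduct_smul, smul_eq_mul]
  exact mul_pos (Complex.zero_lt_real.2 hr) (Matrix.dotProduct_star_self_pos_iff.2 hx)

/-- If `0 ≤ A ≤ b•1` then `A*A ≤ b^2 • 1`. -/
lemma sq_le_smul {A : Matrix (Fin d) (Fin d) ℂ} (hA : A.PosSemidef) {b : ℝ} (hb : 0 ≤ b)
    (h : ((b : ℂ) • 1 - A).PosSemidef) :
    (((b ^ 2 : ℝ) : ℂ) • 1 - A * A).PosSemidef := by
  obtain ⟨s, hsH, hss⟩ : ∃ s : Matrix (Fin d) (Fin d) ℂ, sᴴ = s ∧ s * s = A :=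
    open scoped MatrixOrder in
    ⟨CFC.sqrt A, (nonneg_iff_posSemidef.1 (CFC.sqrt_nonneg A)).1, CFC.sqrt_mul_sqrt_self A (nonneg_iff_posSemidef.2 hA)⟩
  have hs := h.conjTranspose_mul_mul_same s
  rw [hsH] at hs
  have key : s * ((b : ℂ) • 1 - A) * s = (b : ℂ) • A - A * A := by
    rw [← hss]
    simp only [Matrix.mul_sub, Matrix.sub_mul, Matrix.mul_smul, Matrix.smul_mul,
      Matrix.mul_one, Matrix.one_mul, Matrix.mul_assoc]
  rw [key] at hs
  have h2 := psd_smul h hb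
  have := hs.add h2
  have e : (b : ℂ) • A - A * A + (b : ℂ) • ((b : ℂ) • 1 - A)
      = ((b ^ 2 : ℝ) : ℂ) • 1 - A * A := by
    rw [smul_sub, smul_smul]
    push_cast
    ring_nf
    abel
  rwa [e] at this

/-- If `0 ≤ A` and `b•1 ≤ A` with `0 ≤ b`, then `b^2 • 1 ≤ A*A`. -/
lemma smul_le_sq {A : Matrix (Fin d) (Fin d) ℂ} (hA : A.PosSemidef) {b : ℝ} (hb : 0 ≤ b)
    (h : (A - (b : ℂ) • 1).PosSemidef) :
    (A * A - ((b ^ 2 : ℝ) : ℂ) • 1).PosSemidef := by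
  obtain ⟨s, hsH, hss⟩ : ∃ s : Matrix (Fin d) (Fin d) ℂ, sᴴ = s ∧ s * s = A :=
    open scoped MatrixOrder in
    ⟨CFC.sqrt A, (nonneg_iff_posSemidef.1 (CFC.sqrt_nonneg A)).1, CFC.sqrt_mul_sqrt_self A (nonneg_iff_posSemidef.2 hA)⟩
  have hs := h.conjTranspose_mul_mul_same s
  rw [hsH] at hs
  have key : s * (A - (b : ℂ) • 1) * s = A * A - (b : ℂ) • A := by
    rw [← hss]
    simp only [Matrix.mul_sub, Matrix.sub_mul, Matrix.mul_smul, Matrix.smul_mul,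
      Matrix.mul_one, Matrix.one_mul, Matrix.mul_assoc]
  rw [key] at hs
  have h2 := psd_smul h hb
  have := hs.add h2
  have e : A * A - (b : ℂ) • A + (b : ℂ) • (A - (b : ℂ) • 1)
      = A * A - ((b ^ 2 : ℝ) : ℂ) • 1 := by
    rw [smul_sub, smul_smul]
    push_cast
    ring_nf
    abel
  rwa [e] at this

end Aux

theorem stmt2 {d : ℕ} (A₁ A₂ : Matrix (Fin d) (Fin d) ℂ)
    (hA₁ : A₁.IsHermitian) (hA₂ : A₂.IsHermitian)
    (α β : ℝ) (hα : 0 < α) (hβ : 0 < β)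
    (hA₁β : ((β : ℂ) • 1 - A₁).PosSemidef)
    (hA₂α : (A₂ - (α : ℂ) • 1).PosSemidef)
    (c : ℝ) (hc : 0 ≤ c)
    (h : (-((c : ℂ) • 1) - (A₂ - A₁)).PosSemidef) :
    ((-((c * (α / β) ^ 2 : ℝ) : ℂ) • 1) - A₂ * A₁⁻¹ * (A₂ - A₁)).PosSemidef := by
  -- basic positivity facts
  have hA₂psd : A₂.PosSemidef := by
    have := hA₂α.add (psd_smul (Matrix.PosSemidef.one) hα.le)
    simpa using this
  have hN : (A₁ - A₂ - (c : ℂ) • 1).PosSemidef := by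
    have e : -((c : ℂ) • 1) - (A₂ - A₁) = A₁ - A₂ - (c : ℂ) • 1 := by abel
    rwa [e] at h
  have hA₁pd : A₁.PosDef := by
    have h1 := Matrix.PosDef.posSemidef_add
      ((h.add (psd_smul Matrix.PosSemidef.one hc)).add hA₂α) (pd_smul_one hα)
    have e : -((c : ℂ) • 1) - (A₂ - A₁) + (c : ℂ) • 1 + (A₂ - (α : ℂ) • 1)
        + (α : ℂ) • 1 = A₁ := by abel
    rwa [e] at h1
  have hdet : IsUnit A₁.det := (Matrix.isUnit_iff_isUnit_det _).1 hA₁pd.isUnit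
  set J := A₁⁻¹ with hJdef
  have hJ : A₁ * J = 1 := Matrix.mul_nonsing_inv _ hdet
  have hJ' : J * A₁ = 1 := Matrix.nonsing_inv_mul _ hdet
  have hJH : J.IsHermitian := hA₁.inv
  have hJc : ∀ X : Matrix (Fin d) (Fin d) ℂ, J * (A₁ * X) = X := fun X => by
    rw [← Matrix.mul_assoc, hJ', Matrix.one_mul]
  have hJc' : ∀ X : Matrix (Fin d) (Fin d) ℂ, A₁ * (J * X) = X := fun X => by
    rw [← Matrix.mul_assoc, hJ, Matrix.one_mul]
  -- piece F: A₂ * J^2 * A₂ - (α/β)^2 • 1 is PSD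
  have hA₁sq : (((β ^ 2 : ℝ) : ℂ) • 1 - A₁ * A₁).PosSemidef :=
    sq_le_smul hA₁pd.posSemidef hβ.le hA₁β
  have hJsq : (((β ^ 2 : ℝ) : ℂ) • (J * J) - 1).PosSemidef := by
    have hs := hA₁sq.conjTranspose_mul_mul_same J
    rw [hJH.eq] at hs
    have key : J * (((β ^ 2 : ℝ) : ℂ) • 1 - A₁ * A₁) * J
        = ((β ^ 2 : ℝ) : ℂ) • (J * J) - 1 := by
      simp only [Matrix.mul_sub, Matrix.sub_mul, Matrix.mul_smul, Matrix.smul_mul,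
        Matrix.mul_one, Matrix.one_mul, Matrix.mul_assoc, hJc, hJ, hJ']
    rwa [key] at hs
  have hβ2 : (0:ℝ) < β ^ 2 := by positivity
  have hJsq' : ((J * J) - (((β ^ 2 : ℝ)⁻¹ : ℝ) : ℂ) • 1).PosSemidef := by
    have := psd_smul hJsq (le_of_lt (inv_pos.2 hβ2))
    have e : (((β ^ 2 : ℝ)⁻¹ : ℝ) : ℂ) • (((β ^ 2 : ℝ) : ℂ) • (J * J) - 1)
        = (J * J) - (((β ^ 2 : ℝ)⁻¹ : ℝ) : ℂ) • 1 := by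
      rw [smul_sub, smul_smul, ← Complex.ofReal_mul, inv_mul_cancel₀ hβ2.ne', Complex.ofReal_one,
        one_smul]
    rwa [e] at this
  have hA₂sq : (A₂ * A₂ - ((α ^ 2 : ℝ) : ℂ) • 1).PosSemidef :=
    smul_le_sq hA₂psd hα.le hA₂α
  have hF : (A₂ * (J * J) * A₂ - (((α / β) ^ 2 : ℝ) : ℂ) • 1).PosSemidef := by
    have h1 := hJsq'.conjTranspose_mul_mul_same A₂
    rw [hA₂.eq] at h1
    have h2 := psd_smul hA₂sq (le_of_lt (inv_pos.2 hβ2))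
    have := h1.add h2
    have e : A₂ * (J * J - (((β ^ 2 : ℝ)⁻¹ : ℝ) : ℂ) • 1) * A₂
        + (((β ^ 2 : ℝ)⁻¹ : ℝ) : ℂ) • (A₂ * A₂ - ((α ^ 2 : ℝ) : ℂ) • 1)
        = A₂ * (J * J) * A₂ - (((α / β) ^ 2 : ℝ) : ℂ) • 1 := by
      simp only [Matrix.mul_sub, Matrix.sub_mul, Matrix.mul_smul, Matrix.smul_mul,
        Matrix.mul_one, Matrix.one_mul, smul_sub, smul_smul, ← Complex.ofReal_mul]
      rw [div_pow, inv_mul_eq_div]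
      abel
    rwa [e] at this
  -- piece D
  have hD := hA₂psd.conjTranspose_mul_mul_same (J * (A₁ - A₂))
  have eD : (J * (A₁ - A₂))ᴴ = (A₁ - A₂) * J := by
    rw [conjTranspose_mul, conjTranspose_sub, hA₁.eq, hA₂.eq, hJH.eq]
  rw [eD] at hD
  -- piece E
  have hE := hN.conjTranspose_mul_mul_same (J * A₂)
  have eE : (J * A₂)ᴴ = A₂ * J := by
    rw [conjTranspose_mul, hA₂.eq, hJH.eq]
  rw [eE] at hE
  -- assemble
  have total := (hD.add hE).add (psd_smul hF hc)
  have efinal : (A₁ - A₂) * J * A₂ * (J * (A₁ - A₂))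
      + A₂ * J * (A₁ - A₂ - (c : ℂ) • 1) * (J * A₂)
      + (c : ℂ) • (A₂ * (J * J) * A₂ - (((α / β) ^ 2 : ℝ) : ℂ) • 1)
      = (-((c * (α / β) ^ 2 : ℝ) : ℂ) • 1) - A₂ * J * (A₂ - A₁) := by
    simp only [Matrix.mul_sub, Matrix.sub_mul, Matrix.mul_smul, Matrix.smul_mul,
      Matrix.mul_one, Matrix.one_mul, Matrix.mul_assoc, hJc, hJc', hJ, hJ', smul_sub,
      smul_smul, ← Complex.ofReal_mul, neg_smul]
    abel
  rwa [efinal] at total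
end

section
/- Let H, K₁, K₂ be complex Hilbert spaces and T₁ ∈ L(K₁, H), T₂ ∈ L(K₂, H) bounded linear operators. If the range of T₁ is contained in the range of T₂, then there exists a constant C > 0 such that ‖T₁* x‖ ≤ C‖T₂* x‖ for all x ∈ H. -/
set_option maxHeartbeats 1000000

open ContinuousLinearMap

theorem stmt11 {H K₁ K₂ : Type*}
    [NormedAddCommGroup H] [InnerProductSpace ℂ H] [CompleteSpace H]
    [NormedAddCommGroup K₁] [InnerProductSpace ℂ K₁] [CompleteSpace K₁]
    [NormedAddCommGroup K₂] [InnerProductSpace ℂ K₂] [CompleteSpace K₂]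
    (T₁ : K₁ →L[ℂ] H) (T₂ : K₂ →L[ℂ] H)
    (h : Set.range T₁ ⊆ Set.range T₂) :
    ∃ C > 0, ∀ x : H, ‖adjoint T₁ x‖ ≤ C * ‖adjoint T₂ x‖ := by
  classical
  set N : Submodule ℂ K₂ := LinearMap.ker (T₂ : K₂ →ₗ[ℂ] H) with hN
  have hNclosed : IsClosed (N : Set K₂) := isClosed_ker T₂
  haveI : CompleteSpace N := hNclosed.completeSpace_coe
  -- the "graph" subspace
  set D : (K₁ × K₂) →L[ℂ] H :=
    T₁.comp (fst ℂ K₁ K₂) - T₂.comp (snd ℂ K₁ K₂) with hD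
  set G : Submodule ℂ (K₁ × K₂) :=
    LinearMap.ker (D : (K₁ × K₂) →ₗ[ℂ] H) ⊓ Nᗮ.comap ((snd ℂ K₁ K₂) : (K₁ × K₂) →ₗ[ℂ] K₂) with hG
  have hGset : (G : Set (K₁ × K₂)) =
      (LinearMap.ker (D : (K₁ × K₂) →ₗ[ℂ] H) : Set (K₁ × K₂)) ∩ (Prod.snd ⁻¹' (Nᗮ : Set K₂)) := rfl
  have hGclosed : IsClosed (G : Set (K₁ × K₂)) := by
    rw [hGset]
    exact (isClosed_ker D).inter (N.isClosed_orthogonal.preimage continuous_snd)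
  haveI : CompleteSpace G := hGclosed.completeSpace_coe
  -- projection to K₁ is a continuous bijection
  set π₁ : G →L[ℂ] K₁ := (fst ℂ K₁ K₂).comp G.subtypeL with hπ₁
  have hmem : ∀ p : G, T₁ (p : K₁ × K₂).1 = T₂ (p : K₁ × K₂).2 ∧ (p : K₁ × K₂).2 ∈ Nᗮ := by
    intro p
    obtain ⟨h1, h2⟩ := p.2
    refine ⟨?_, h2⟩
    have : D (p : K₁ × K₂) = 0 := h1
    simpa [hD, sub_eq_zero] using this
  have hinj : LinearMap.ker (π₁ : G →ₗ[ℂ] K₁) = ⊥ := by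
    rw [LinearMap.ker_eq_bot']
    intro p hp
    have h1 := (hmem p).1
    have h2 := (hmem p).2
    have hp1 : (p : K₁ × K₂).1 = 0 := hp
    have hT2 : T₂ (p : K₁ × K₂).2 = 0 := by rw [← h1, hp1, map_zero]
    have hker : (p : K₁ × K₂).2 ∈ N := hT2
    have hmem2 : (p : K₁ × K₂).2 ∈ N ⊓ Nᗮ := Submodule.mem_inf.mpr ⟨hker, h2⟩
    rw [Submodule.inf_orthogonal_eq_bot, Submodule.mem_bot] at hmem2
    have : (p : K₁ × K₂).2 = 0 := hmem2
    apply Subtype.ext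
    exact Prod.ext hp1 this
  have hsurj : LinearMap.range (π₁ : G →ₗ[ℂ] K₁) = ⊤ := by
    rw [LinearMap.range_eq_top]
    intro k
    obtain ⟨y, hy⟩ := h ⟨k, rfl⟩
    set z : K₂ := y - (N.orthogonalProjectionOnto y : K₂) with hz
    have hz1 : z ∈ Nᗮ := Submodule.sub_starProjection_mem_orthogonal (K := N) y
    have hz2 : T₂ z = T₂ y := by
      have : T₂ ((N.orthogonalProjectionOnto y : K₂)) = 0 := (N.orthogonalProjectionOnto y).2
      rw [hz, map_sub, this, sub_zero]
    have hmemG : (k, z) ∈ G := by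
      constructor
      · show D (k, z) = 0
        simp [hD, hz2, hy, sub_eq_zero]
      · exact hz1
    exact ⟨⟨(k, z), hmemG⟩, rfl⟩
  set e := ContinuousLinearEquiv.ofBijective π₁ hinj hsurj with he
  set S : K₁ →L[ℂ] K₂ :=
    ((snd ℂ K₁ K₂).comp G.subtypeL).comp (e.symm : K₁ →L[ℂ] G) with hS
  have hfact : T₁ = T₂.comp S := by
    ext k
    have h1 : (((e.symm k : G) : K₁ × K₂)).1 = k := by
      have := e.apply_symm_apply k
      exact this
    have := (hmem (e.symm k)).1
    rw [h1] at this
    simpa [hS] using this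
  refine ⟨‖adjoint S‖ + 1, by positivity, fun x => ?_⟩
  have : adjoint T₁ x = adjoint S (adjoint T₂ x) := by
    rw [hfact, adjoint_comp]; rfl
  rw [this]
  calc ‖adjoint S (adjoint T₂ x)‖ ≤ ‖adjoint S‖ * ‖adjoint T₂ x‖ := (adjoint S).le_opNorm _
    _ ≤ (‖adjoint S‖ + 1) * ‖adjoint T₂ x‖ := by
        have := norm_nonneg (adjoint T₂ x); nlinarith [norm_nonneg (adjoint S)]
end

section
/- Let H, K₁, K₂ be complex Hilbert spaces and T₁ ∈ L(K₁, H), T₂ ∈ L(K₂, H) bounded linear operators. If there exists a constant C > 0 such that ‖T₁* x‖ ≤ C‖T₂* x‖ for all x ∈ H, then the range of T₁ is contained in the range of T₂. -/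
open ContinuousLinearMap

theorem stmt12 {H K₁ K₂ : Type*}
    [NormedAddCommGroup H] [InnerProductSpace ℂ H] [CompleteSpace H]
    [NormedAddCommGroup K₁] [InnerProductSpace ℂ K₁] [CompleteSpace K₁]
    [NormedAddCommGroup K₂] [InnerProductSpace ℂ K₂] [CompleteSpace K₂]
    (T₁ : K₁ →L[ℂ] H) (T₂ : K₂ →L[ℂ] H)
    (h : ∃ C > 0, ∀ x : H, ‖adjoint T₁ x‖ ≤ C * ‖adjoint T₂ x‖) :
    Set.range T₁ ⊆ Set.range T₂ := by
  obtain ⟨C, hC, hle⟩ := h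
  rintro _ ⟨y, rfl⟩
  -- the functional g x = ⟪T₁ y, x⟫
  set g : H →ₗ[ℂ] ℂ := (innerSL ℂ (T₁ y)).toLinearMap with hg
  -- well-definedness
  have hwd : ∀ a b : H, adjoint T₂ a = adjoint T₂ b → g a = g b := by
    intro a b hab
    have h1 : adjoint T₂ (a - b) = 0 := by rw [map_sub, hab, sub_self]
    have h2 : ‖adjoint T₁ (a - b)‖ ≤ C * ‖adjoint T₂ (a - b)‖ := hle _
    rw [h1, norm_zero, mul_zero] at h2
    have h3 : adjoint T₁ (a - b) = 0 := by
      simpa using norm_le_zero_iff.mp h2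
    have h4 : inner ℂ (T₁ y) (a - b) = (0 : ℂ) := by
      rw [← ContinuousLinearMap.adjoint_inner_right, h3, inner_zero_right]
    have : (inner ℂ (T₁ y) a : ℂ) - inner ℂ (T₁ y) b = 0 := by
      simpa [inner_sub_right] using h4
    simpa [hg, innerSL_apply_apply] using sub_eq_zero.mp this
  set p : Submodule ℂ K₂ := LinearMap.range (adjoint T₂ : H →ₗ[ℂ] K₂) with hp
  -- linear functional on p
  have hmem : ∀ w : p, ∃ x : H, adjoint T₂ x = (w : K₂) := fun w => w.2
  choose pre hpre using hmem
  have hwd' : ∀ (w : p) (x : H), adjoint T₂ x = (w : K₂) → g x = g (pre w) := by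
    intro w x hx
    exact hwd _ _ (by rw [hx, hpre])
  let f : p →ₗ[ℂ] ℂ :=
    { toFun := fun w => g (pre w)
      map_add' := by
        intro w w'
        show g (pre (w + w')) = g (pre w) + g (pre w')
        rw [← hwd' (w + w') (pre w + pre w') (by simp [hpre]), map_add]
      map_smul' := by
        intro c w
        show g (pre (c • w)) = c • g (pre w)
        rw [← hwd' (c • w) (c • pre w) (by simp [hpre]), map_smul] }
  have hf : ∀ x : H, f ⟨adjoint T₂ x, ⟨x, rfl⟩⟩ = g x := by
    intro x
    exact (hwd' ⟨adjoint T₂ x, ⟨x, rfl⟩⟩ x rfl).symm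
  -- continuity
  have hbound : ∀ w : p, ‖f w‖ ≤ (C * ‖y‖) * ‖w‖ := by
    intro w
    have h1 : ‖f w‖ = ‖g (pre w)‖ := rfl
    have h2 : ‖g (pre w)‖ ≤ ‖y‖ * ‖adjoint T₁ (pre w)‖ := by
      have : g (pre w) = inner ℂ y (adjoint T₁ (pre w)) := by
        simp [hg, innerSL_apply_apply, ContinuousLinearMap.adjoint_inner_right]
      rw [this]
      exact norm_inner_le_norm _ _
    have h3 : ‖adjoint T₁ (pre w)‖ ≤ C * ‖adjoint T₂ (pre w)‖ := hle _
    have h4 : ‖adjoint T₂ (pre w)‖ = ‖(w : K₂)‖ := by rw [hpre]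
    calc ‖f w‖ ≤ ‖y‖ * (C * ‖adjoint T₂ (pre w)‖) := by
          rw [h1]; exact h2.trans (by gcongr)
      _ = (C * ‖y‖) * ‖(w : K₂)‖ := by rw [h4]; ring
      _ = (C * ‖y‖) * ‖w‖ := rfl
  let fL : p →L[ℂ] ℂ := f.mkContinuous (C * ‖y‖) hbound
  obtain ⟨ψ, hψ, -⟩ := exists_extension_norm_eq p fL
  set z := (InnerProductSpace.toDual ℂ K₂).symm ψ with hz
  refine ⟨z, ?_⟩
  -- show T₂ z = T₁ y
  have key : ∀ x : H, (inner ℂ (T₂ z) x : ℂ) = inner ℂ (T₁ y) x := by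
    intro x
    have h1 : (inner ℂ z (adjoint T₂ x) : ℂ) = ψ (adjoint T₂ x) :=
      InnerProductSpace.toDual_symm_apply
    have h2 : ψ (adjoint T₂ x) = fL ⟨adjoint T₂ x, ⟨x, rfl⟩⟩ := hψ ⟨adjoint T₂ x, ⟨x, rfl⟩⟩
    have h3 : fL ⟨adjoint T₂ x, ⟨x, rfl⟩⟩ = g x := hf x
    have h4 : (inner ℂ z (adjoint T₂ x) : ℂ) = inner ℂ (T₂ z) x := by
      rw [ContinuousLinearMap.adjoint_inner_right]
    rw [← h4, h1, h2, h3]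
    simp [hg, innerSL_apply_apply]
  have := ext_inner_right ℂ (fun x => key x)
  exact this
end
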